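/- arXiv:2511.18819 — 2 statements merged into one kernel-verified Lean document; each statement's English description precedes it below -/
import Mathlib

section
/- Let 1 < p ≤ 2, d ≥ 2, and S(B) = (1 + |B|²)^{(p−2)/2} B for symmetric d×d matrices. Then there exists a constant c₂ > 0 such that for all symmetric matrices B and C, |S(B) − S(C)| ≤ c₂ (1 + |B|² + |C|²)^{(p−2)/2} |B − C|. -/
noncomputable section

open Set

/-- Frobenius norm of a real `d × d` matrix. -/
def fnorm {d : ℕ} (B : Matrix (Fin d) (Fin d) ℝ) : ℝ :=
  Real.sqrt (∑ i, ∑ j, (B i j) ^ 2)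

/-- The power-law extra stress tensor `S(B) = (1 + |B|²)^((p-2)/2) B`. -/
def SS {d : ℕ} (p : ℝ) (B : Matrix (Fin d) (Fin d) ℝ) : Matrix (Fin d) (Fin d) ℝ :=
  fun i j => (1 + fnorm B ^ 2) ^ ((p - 2) / 2) * B i j

/-! Write `S = stress α`, `g(t) = (1 + t²)^α` with `-1/2 ≤ α ≤ 0` and `a = ‖x‖ ≥ b = ‖y‖`. Then
`S x - S y = g(a) (x - y) + (g(a) - g(b)) y`. The first term is harmless since
`1 + a² + b² ≤ 2 (1 + a²)`. For the second, `t ↦ g(t) √(1 + t²) = (1 + t²)^(α + 1/2)` is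
nondecreasing, so `(g(b) - g(a)) b ≤ (g(b) - g(a)) √(1 + b²) ≤ g(a) (√(1 + a²) - √(1 + b²))`,
and `t ↦ √(1 + t²)` is `1`-Lipschitz. -/

namespace PowerLaw

open Real

lemma sqrt_one_add_sq_sub_le {a b : ℝ} (hb : 0 ≤ b) (hab : b ≤ a) :
    √(1 + a ^ 2) - √(1 + b ^ 2) ≤ a - b := by
  have hu := sq_sqrt (show 0 ≤ 1 + a ^ 2 by positivity)
  have hv := sq_sqrt (show 0 ≤ 1 + b ^ 2 by positivity)
  have hua : a ≤ √(1 + a ^ 2) := le_sqrt_of_sq_le (by linarith)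
  have hvb : b ≤ √(1 + b ^ 2) := le_sqrt_of_sq_le (by linarith)
  have hvu : √(1 + b ^ 2) ≤ √(1 + a ^ 2) := sqrt_le_sqrt (by nlinarith)
  nlinarith [sqrt_nonneg (1 + b ^ 2)]

lemma rpow_one_add_sq_mul_sqrt_le {α a b : ℝ} (hα : -(1 / 2) ≤ α) (hb : 0 ≤ b) (hab : b ≤ a) :
    (1 + b ^ 2) ^ α * √(1 + b ^ 2) ≤ (1 + a ^ 2) ^ α * √(1 + a ^ 2) := by
  have hpos : ∀ t : ℝ, 0 < 1 + t ^ 2 := fun t => by positivity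
  simp only [sqrt_eq_rpow, ← rpow_add (hpos _)]
  exact rpow_le_rpow (hpos b).le (by nlinarith) (by linarith)

lemma rpow_one_add_sq_sub_mul_le {α a b : ℝ} (hα₁ : -(1 / 2) ≤ α) (hα₂ : α ≤ 0) (hb : 0 ≤ b)
    (hab : b ≤ a) : ((1 + b ^ 2) ^ α - (1 + a ^ 2) ^ α) * b ≤ (1 + a ^ 2) ^ α * (a - b) := by
  have hanti : (1 + a ^ 2) ^ α ≤ (1 + b ^ 2) ^ α :=
    rpow_le_rpow_of_nonpos (by positivity) (by nlinarith) hα₂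
  have hbsqrt : b ≤ √(1 + b ^ 2) := le_sqrt_of_sq_le (by linarith)
  have hga : 0 ≤ (1 + a ^ 2) ^ α := by positivity
  calc ((1 + b ^ 2) ^ α - (1 + a ^ 2) ^ α) * b
      ≤ ((1 + b ^ 2) ^ α - (1 + a ^ 2) ^ α) * √(1 + b ^ 2) :=
        mul_le_mul_of_nonneg_left hbsqrt (sub_nonneg.2 hanti)
    _ ≤ (1 + a ^ 2) ^ α * (√(1 + a ^ 2) - √(1 + b ^ 2)) := by
        linarith [rpow_one_add_sq_mul_sqrt_le hα₁ hb hab]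
    _ ≤ (1 + a ^ 2) ^ α * (a - b) :=
        mul_le_mul_of_nonneg_left (sqrt_one_add_sq_sub_le hb hab) hga

lemma rpow_one_add_sq_le_two_rpow_mul {α a b : ℝ} (hα : α ≤ 0) (hab : b ^ 2 ≤ a ^ 2) :
    (1 + a ^ 2) ^ α ≤ 2 ^ (-α) * (1 + a ^ 2 + b ^ 2) ^ α := by
  have hpos : (0 : ℝ) < 1 + a ^ 2 := by positivity
  have hweight : (2 * (1 + a ^ 2)) ^ α ≤ (1 + a ^ 2 + b ^ 2) ^ α :=
    rpow_le_rpow_of_nonpos (by positivity) (by linarith) hα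
  calc (1 + a ^ 2) ^ α = 2 ^ (-α) * (2 * (1 + a ^ 2)) ^ α := by
        rw [mul_rpow zero_le_two hpos.le, ← mul_assoc, ← rpow_add zero_lt_two]
        simp
    _ ≤ 2 ^ (-α) * (1 + a ^ 2 + b ^ 2) ^ α := by gcongr

variable {E : Type*} [SeminormedAddCommGroup E] [NormedSpace ℝ E]

def stress (α : ℝ) (x : E) : E := (1 + ‖x‖ ^ 2) ^ α • x

lemma norm_stress_sub_le_of_norm_le {α : ℝ} (hα₁ : -(1 / 2) ≤ α) (hα₂ : α ≤ 0) {x y : E}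
    (hyx : ‖y‖ ≤ ‖x‖) :
    ‖stress α x - stress α y‖ ≤ 2 * (1 + ‖x‖ ^ 2) ^ α * ‖x - y‖ := by
  set ga := (1 + ‖x‖ ^ 2) ^ α
  set gb := (1 + ‖y‖ ^ 2) ^ α
  have hga : 0 ≤ ga := by positivity
  have hanti : ga ≤ gb := rpow_le_rpow_of_nonpos (by positivity) (by gcongr) hα₂
  have hdecomp : stress α x - stress α y = ga • (x - y) + (ga - gb) • y := by
    simp only [stress, ga, gb, smul_sub, sub_smul]
    abel
  have hsplit : ‖stress α x - stress α y‖ ≤ ga * ‖x - y‖ + (gb - ga) * ‖y‖ := by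
    rw [hdecomp]
    refine (norm_add_le _ _).trans_eq ?_
    rw [norm_smul, norm_smul, Real.norm_of_nonneg hga, Real.norm_of_nonpos (by linarith)]
    ring
  have hsecond : (gb - ga) * ‖y‖ ≤ ga * (‖x‖ - ‖y‖) :=
    rpow_one_add_sq_sub_mul_le hα₁ hα₂ (norm_nonneg y) hyx
  have hrev : ga * (‖x‖ - ‖y‖) ≤ ga * ‖x - y‖ :=
    mul_le_mul_of_nonneg_left (norm_sub_norm_le x y) hga
  linarith

theorem norm_stress_sub_le {α : ℝ} (hα₁ : -(1 / 2) ≤ α) (hα₂ : α ≤ 0) (x y : E) :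
    ‖stress α x - stress α y‖ ≤ 2 * 2 ^ (-α) * (1 + ‖x‖ ^ 2 + ‖y‖ ^ 2) ^ α * ‖x - y‖ := by
  wlog hyx : ‖y‖ ≤ ‖x‖ generalizing x y
  · have h := this y x (le_of_not_ge hyx)
    rwa [norm_sub_rev, add_right_comm, norm_sub_rev y] at h
  have hweight := rpow_one_add_sq_le_two_rpow_mul hα₂ (pow_le_pow_left₀ (norm_nonneg y) hyx 2)
  calc ‖stress α x - stress α y‖ ≤ 2 * (1 + ‖x‖ ^ 2) ^ α * ‖x - y‖ :=
        norm_stress_sub_le_of_norm_le hα₁ hα₂ hyx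
    _ ≤ 2 * (2 ^ (-α) * (1 + ‖x‖ ^ 2 + ‖y‖ ^ 2) ^ α) * ‖x - y‖ := by gcongr
    _ = 2 * 2 ^ (-α) * (1 + ‖x‖ ^ 2 + ‖y‖ ^ 2) ^ α * ‖x - y‖ := by ring

end PowerLaw

attribute [local instance] Matrix.frobeniusSeminormedAddCommGroup Matrix.frobeniusNormedSpace

lemma fnorm_eq_frobenius_norm {d : ℕ} (B : Matrix (Fin d) (Fin d) ℝ) : fnorm B = ‖B‖ := by
  simp only [Matrix.frobenius_norm_def, fnorm, Real.sqrt_eq_rpow, Real.norm_eq_abs, Real.rpow_two,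
    sq_abs]

lemma SS_eq_stress {d : ℕ} (p : ℝ) (B : Matrix (Fin d) (Fin d) ℝ) :
    SS p B = PowerLaw.stress ((p - 2) / 2) B := by
  ext i j
  simp [SS, PowerLaw.stress, fnorm_eq_frobenius_norm]

theorem stmt5_general (p : ℝ) (hp1 : 1 < p) (hp2 : p ≤ 2) (d : ℕ) :
    ∃ c₂ > (0:ℝ), ∀ B C : Matrix (Fin d) (Fin d) ℝ, B.IsSymm → C.IsSymm →
      fnorm (SS p B - SS p C)
        ≤ c₂ * (1 + fnorm B ^ 2 + fnorm C ^ 2) ^ ((p - 2) / 2) * fnorm (B - C) := by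
  refine ⟨2 * 2 ^ (-((p - 2) / 2)), by positivity, fun B C _ _ => ?_⟩
  simp only [fnorm_eq_frobenius_norm, SS_eq_stress]
  exact PowerLaw.norm_stress_sub_le (by linarith) (by linarith) B C

theorem stmt5 (p : ℝ) (hp1 : 1 < p) (hp2 : p ≤ 2) (d : ℕ) (hd : 2 ≤ d) :
    ∃ c₂ > (0:ℝ), ∀ B C : Matrix (Fin d) (Fin d) ℝ, B.IsSymm → C.IsSymm →
      fnorm (SS p B - SS p C)
        ≤ c₂ * (1 + fnorm B ^ 2 + fnorm C ^ 2) ^ ((p - 2) / 2) * fnorm (B - C) :=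
  stmt5_general p hp1 hp2 d
end
end

section
/- (Local version of Gronwall's lemma) Let T, α, c₀ > 0 be constants, h ∈ L¹(0,T) with h ≥ 0 a.e., and f ∈ C¹[0,T] with f ≥ 0 satisfying f'(t) ≤ h(t) + c₀ f(t)^{1+α} for all t ∈ [0,T]. Define H(t) = f(0) + ∫₀ᵗ h(s) ds, and let t₀ ∈ [0,T] satisfy α c₀ H(t₀)^α t₀ < 1. Then for all t ∈ [0, t₀], f(t) ≤ H(t) + H(t)·((1 − α c₀ H(t)^α t)^{−1/α} − 1). -/
/-!
With `u s = c₀ ∫₀ˢ f ^ (1 + α)`, integrating the differential inequality gives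
`f ≤ H + u ≤ H t + u` on `[0, t]`, so `v = H t + u` satisfies the Bernoulli inequality
`v' ≤ c₀ v ^ (1 + α)`. Then `v ^ (-α) + α c₀ s` is nondecreasing, whence
`v t ^ (-α) ≥ H t ^ (-α) - α c₀ t = H t ^ (-α) (1 - α c₀ H t ^ α t) > 0`, which is the bound.
-/

open Set MeasureTheory

theorem rpow_neg_sub_le_of_deriv_le_rpow {v v' : ℝ → ℝ} {α c a b : ℝ} (hα : 0 ≤ α)
    (hab : a ≤ b) (hv : ContinuousOn v (Icc a b)) (hv_pos : ∀ s ∈ Icc a b, 0 < v s)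
    (hderiv : ∀ s ∈ Ioo a b, HasDerivAt v (v' s) s)
    (hle : ∀ s ∈ Ioo a b, v' s ≤ c * v s ^ (1 + α)) :
    v a ^ (-α) - α * c * (b - a) ≤ v b ^ (-α) := by
  -- the derivative of `v ^ (-α) + α c s` is `α v ^ (-α - 1) (c v ^ (1 + α) - v') ≥ 0`
  have hmono : MonotoneOn (fun s => v s ^ (-α) + α * c * s) (Icc a b) := by
    refine monotoneOn_of_hasDerivWithinAt_nonneg (convex_Icc a b)
      (f' := fun s => v' s * -α * v s ^ (-α - 1) + α * c * 1) ?_ ?_ ?_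
    · exact (hv.rpow_const fun s hs => Or.inl (hv_pos s hs).ne').add
        (continuousOn_const.mul continuousOn_id)
    · intro s hs
      rw [interior_Icc] at hs
      exact (((hderiv s hs).rpow_const (Or.inl (hv_pos s (Ioo_subset_Icc_self hs)).ne')).add
        ((hasDerivAt_id s).const_mul (α * c))).hasDerivWithinAt
    · intro s hs
      rw [interior_Icc] at hs
      have hpos := hv_pos s (Ioo_subset_Icc_self hs)
      have hX : 0 ≤ v s ^ (-α - 1) := Real.rpow_nonneg hpos.le _
      have hinv : v s ^ (-α - 1) * v s ^ (1 + α) = 1 := by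
        rw [← Real.rpow_add hpos, show -α - 1 + (1 + α) = 0 by ring, Real.rpow_zero]
      have hgap := mul_nonneg (mul_nonneg hα hX) (sub_nonneg.2 (hle s hs))
      linear_combination hgap + α * c * hinv
  have := hmono (left_mem_Icc.2 hab) (right_mem_Icc.2 hab) hab
  simp only at this
  linarith

theorem le_mul_one_sub_rpow_of_deriv_le_rpow {v v' : ℝ → ℝ} {α c a b : ℝ} (hα : 0 < α)
    (hab : a ≤ b) (hv : ContinuousOn v (Icc a b)) (hv_pos : ∀ s ∈ Icc a b, 0 < v s)
    (hderiv : ∀ s ∈ Ioo a b, HasDerivAt v (v' s) s)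
    (hle : ∀ s ∈ Ioo a b, v' s ≤ c * v s ^ (1 + α))
    (hsmall : α * c * v a ^ α * (b - a) < 1) :
    v b ≤ v a * (1 - α * c * v a ^ α * (b - a)) ^ (-(1 / α)) := by
  have hA := hv_pos a (left_mem_Icc.2 hab)
  have hB := hv_pos b (right_mem_Icc.2 hab)
  have hD : 0 < 1 - α * c * v a ^ α * (b - a) := sub_pos.2 hsmall
  have hinv : ∀ x : ℝ, 0 ≤ x → (x ^ (-α)) ^ (-(1 / α)) = x := fun x hx => by
    rw [← Real.rpow_mul hx, show -α * -(1 / α) = 1 by field_simp, Real.rpow_one]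
  have key : v a ^ (-α) * (1 - α * c * v a ^ α * (b - a)) ≤ v b ^ (-α) := by
    have hE : v a ^ (-α) * v a ^ α = 1 := by rw [← Real.rpow_add hA]; simp
    linear_combination rpow_neg_sub_le_of_deriv_le_rpow hα.le hab hv hv_pos hderiv hle
      - α * c * (b - a) * hE
  calc v b = (v b ^ (-α)) ^ (-(1 / α)) := (hinv _ hB.le).symm
    _ ≤ (v a ^ (-α) * (1 - α * c * v a ^ α * (b - a))) ^ (-(1 / α)) :=
      Real.rpow_le_rpow_of_nonpos (by positivity) key (by simp [hα.le])
    _ = v a * (1 - α * c * v a ^ α * (b - a)) ^ (-(1 / α)) := by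
      rw [Real.mul_rpow (by positivity) hD.le, hinv _ hA.le]

theorem le_mul_one_sub_rpow_of_le_pos_add_integral_rpow {f : ℝ → ℝ} {α c a b z : ℝ}
    (hα : 0 < α) (hc : 0 ≤ c) (hab : a ≤ b) (hz : 0 < z) (hf : ContinuousOn f (Icc a b))
    (hf_nonneg : ∀ s ∈ Icc a b, 0 ≤ f s)
    (hfz : ∀ s ∈ Icc a b, f s ≤ z + c * ∫ r in a..s, f r ^ (1 + α))
    (hsmall : α * c * z ^ α * (b - a) < 1) :
    f b ≤ z * (1 - α * c * z ^ α * (b - a)) ^ (-(1 / α)) := by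
  set v : ℝ → ℝ := fun s => z + c * ∫ r in a..s, f r ^ (1 + α) with hv_def
  have hg : ContinuousOn (fun r => f r ^ (1 + α)) (Icc a b) :=
    hf.rpow_const fun _ _ => Or.inr (by positivity)
  have hv : ContinuousOn v (Icc a b) := by
    have hI := intervalIntegral.continuousOn_primitive_interval (μ := volume)
      (by rw [uIcc_of_le hab]; exact hg.integrableOn_Icc)
    rw [uIcc_of_le hab] at hI
    exact continuousOn_const.add (continuousOn_const.mul hI)
  have hv_pos : ∀ s ∈ Icc a b, 0 < v s := fun s hs => by
    have : 0 ≤ ∫ r in a..s, f r ^ (1 + α) := intervalIntegral.integral_nonneg hs.1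
      fun r hr => Real.rpow_nonneg (hf_nonneg r ⟨hr.1, hr.2.trans hs.2⟩) _
    positivity
  have hderiv : ∀ s ∈ Ioo a b, HasDerivAt v (c * f s ^ (1 + α)) s := fun s hs =>
    ((intervalIntegral.integral_hasDerivAt_right
      ((hg.mono (Icc_subset_Icc_right hs.2.le)).intervalIntegrable_of_Icc hs.1.le)
      ((hg.mono Ioo_subset_Icc_self).stronglyMeasurableAtFilter isOpen_Ioo s hs)
      (hg.continuousAt (Icc_mem_nhds hs.1 hs.2))).const_mul c).const_add z
  have hle : ∀ s ∈ Ioo a b, c * f s ^ (1 + α) ≤ c * v s ^ (1 + α) := fun s hs => by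
    have hs' := Ioo_subset_Icc_self hs
    gcongr
    · exact hf_nonneg s hs'
    · exact hfz s hs'
  have hv_a : v a = z := by simp [hv_def]
  calc f b ≤ v b := hfz b (right_mem_Icc.2 hab)
    _ ≤ _ := by
      simpa only [hv_a] using le_mul_one_sub_rpow_of_deriv_le_rpow hα hab hv hv_pos hderiv hle
        (by rwa [hv_a])

theorem le_mul_one_sub_rpow_of_le_add_integral_rpow {f : ℝ → ℝ} {α c a b z : ℝ}
    (hα : 0 < α) (hc : 0 ≤ c) (hab : a ≤ b) (hz : 0 ≤ z) (hf : ContinuousOn f (Icc a b))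
    (hf_nonneg : ∀ s ∈ Icc a b, 0 ≤ f s)
    (hfz : ∀ s ∈ Icc a b, f s ≤ z + c * ∫ r in a..s, f r ^ (1 + α))
    (hsmall : α * c * z ^ α * (b - a) < 1) :
    f b ≤ z * (1 - α * c * z ^ α * (b - a)) ^ (-(1 / α)) := by
  have hq : ContinuousAt (fun y : ℝ => α * c * y ^ α * (b - a)) z :=
    (continuousAt_const.mul (continuousAt_id.rpow_const (Or.inr hα.le))).mul continuousAt_const
  have hφ : ContinuousAt (fun y => y * (1 - α * c * y ^ α * (b - a)) ^ (-(1 / α))) z :=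
    continuousAt_id.mul ((hq.const_sub 1).rpow_const (Or.inl (sub_pos.2 hsmall).ne'))
  -- `v ^ (-α)` breaks down at `v = 0`: apply the positive case to each `y > z`, let `y ↓ z`
  refine ge_of_tendsto (hφ.tendsto.mono_left (nhdsWithin_le_nhds (s := Ioi z))) ?_
  filter_upwards [nhdsWithin_le_nhds (hq.eventually_lt continuousAt_const hsmall),
    self_mem_nhdsWithin] with y hy hzy
  exact le_mul_one_sub_rpow_of_le_pos_add_integral_rpow hα hc hab (hz.trans_lt hzy) hf hf_nonneg
    (fun s hs => (hfz s hs).trans (by gcongr; exact hzy.le)) hy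

theorem monotoneOn_integral_of_ae_nonneg {h : ℝ → ℝ} {a b : ℝ}
    (hh : IntervalIntegrable h volume a b)
    (hh_nonneg : ∀ᵐ t ∂(volume.restrict (Icc a b)), 0 ≤ h t) :
    MonotoneOn (fun t => ∫ s in a..t, h s) (Icc a b) := fun _ hs _ hr hsr =>
  intervalIntegral.integral_mono_interval le_rfl hs.1 hsr
    (ae_restrict_of_ae_restrict_of_subset (Ioc_subset_Icc_self.trans (Icc_subset_Icc_right hr.2))
      hh_nonneg)
    (hh.mono_set (uIcc_subset_uIcc left_mem_uIcc (Icc_subset_uIcc hr)))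

theorem le_add_integral_add_integral_of_deriv_le {f f' h g : ℝ → ℝ} {a b : ℝ} (hab : a ≤ b)
    (hf : ∀ x ∈ Icc a b, HasDerivAt f (f' x) x) (hh : IntervalIntegrable h volume a b)
    (hg : IntervalIntegrable g volume a b) (hle : ∀ x ∈ Ioo a b, f' x ≤ h x + g x) :
    f b ≤ f a + (∫ x in a..b, h x) + ∫ x in a..b, g x := by
  have := intervalIntegral.sub_le_integral_of_hasDeriv_right_of_le hab
    (fun x hx => (hf x hx).continuousAt.continuousWithinAt)
    (fun x hx => (hf x (Ioo_subset_Icc_self hx)).hasDerivWithinAt)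
    ((intervalIntegrable_iff_integrableOn_Icc_of_le hab).1 (hh.add hg)) hle
  rw [intervalIntegral.integral_add hh hg] at this
  linarith

theorem stmt7_general (T α c₀ : ℝ) (hα : 0 < α) (hc₀ : 0 < c₀)
    (h f f' : ℝ → ℝ)
    (hh_int : IntervalIntegrable h volume 0 T)
    (hh_nonneg : ∀ᵐ t ∂(volume.restrict (Set.Icc (0:ℝ) T)), 0 ≤ h t)
    (hf_deriv : ∀ t ∈ Set.Icc (0:ℝ) T, HasDerivAt f (f' t) t)
    (hf_nonneg : ∀ t ∈ Set.Icc (0:ℝ) T, 0 ≤ f t)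
    (hineq : ∀ t ∈ Set.Icc (0:ℝ) T, f' t ≤ h t + c₀ * f t ^ (1 + α))
    (H : ℝ → ℝ) (hH : ∀ t, H t = f 0 + ∫ s in (0:ℝ)..t, h s)
    (t₀ : ℝ) (ht₀ : t₀ ∈ Set.Icc (0:ℝ) T) (hsmall : α * c₀ * H t₀ ^ α * t₀ < 1) :
    ∀ t ∈ Set.Icc (0:ℝ) t₀,
      f t ≤ H t + H t * ((1 - α * c₀ * H t ^ α * t) ^ (-(1/α)) - 1) := by
  intro t ht
  have htT : t ≤ T := ht.2.trans ht₀.2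
  have hsub : Icc 0 t ⊆ Icc 0 T := Icc_subset_Icc_right htT
  have h0 : (0 : ℝ) ∈ Icc 0 T := hsub (left_mem_Icc.2 ht.1)
  have htI : t ∈ Icc 0 T := hsub (right_mem_Icc.2 ht.1)
  have hHmono : MonotoneOn H (Icc 0 T) := fun s hs r hr hsr => by
    rw [hH, hH]
    exact add_le_add_right (monotoneOn_integral_of_ae_nonneg hh_int hh_nonneg hs hr hsr) (f 0)
  have hHt_nonneg : 0 ≤ H t :=
    calc 0 ≤ f 0 := hf_nonneg 0 h0
      _ = H 0 := by rw [hH, intervalIntegral.integral_same, add_zero]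
      _ ≤ H t := hHmono h0 htI ht.1
  have hsmall_t : α * c₀ * H t ^ α * t < 1 := by
    have hHle := hHmono htI ht₀ ht.2
    have := Real.rpow_nonneg (hHt_nonneg.trans hHle) α
    exact lt_of_le_of_lt (by gcongr; exacts [ht.1, ht.2]) hsmall
  have hfc : ContinuousOn f (Icc 0 T) := fun s hs =>
    (hf_deriv s hs).continuousAt.continuousWithinAt
  have hf_le : ∀ s ∈ Icc 0 t, f s ≤ H t + c₀ * ∫ r in (0:ℝ)..s, f r ^ (1 + α) := by
    intro s hs
    have hsT : Icc 0 s ⊆ Icc 0 T := Icc_subset_Icc_right (hsub hs).2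
    have := le_add_integral_add_integral_of_deriv_le hs.1 (fun x hx => hf_deriv x (hsT hx))
      (hh_int.mono_set (uIcc_subset_uIcc left_mem_uIcc (Icc_subset_uIcc (hsub hs))))
      (((hfc.mono hsT).rpow_const fun _ _ => Or.inr (by positivity)).intervalIntegrable_of_Icc
        hs.1 |>.const_mul c₀)
      (fun x hx => hineq x (hsT (Ioo_subset_Icc_self hx)))
    rw [intervalIntegral.integral_const_mul] at this
    linarith [hH s, hHmono (hsub hs) htI hs.2]
  rw [show ∀ x y : ℝ, x + x * (y - 1) = x * y by intros; ring]
  simpa only [sub_zero] using le_mul_one_sub_rpow_of_le_add_integral_rpow hα hc₀.le ht.1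
    hHt_nonneg (hfc.mono hsub) (fun s hs => hf_nonneg s (hsub hs)) hf_le (by rwa [sub_zero])

theorem stmt7 (T α c₀ : ℝ) (hT : 0 < T) (hα : 0 < α) (hc₀ : 0 < c₀)
    (h f f' : ℝ → ℝ)
    (hh_int : IntervalIntegrable h volume 0 T)
    (hh_nonneg : ∀ᵐ t ∂(volume.restrict (Set.Icc (0:ℝ) T)), 0 ≤ h t)
    (hf_deriv : ∀ t ∈ Set.Icc (0:ℝ) T, HasDerivAt f (f' t) t)
    (hf'_cont : ContinuousOn f' (Set.Icc (0:ℝ) T))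
    (hf_nonneg : ∀ t ∈ Set.Icc (0:ℝ) T, 0 ≤ f t)
    (hineq : ∀ t ∈ Set.Icc (0:ℝ) T, f' t ≤ h t + c₀ * f t ^ (1 + α))
    (H : ℝ → ℝ) (hH : ∀ t, H t = f 0 + ∫ s in (0:ℝ)..t, h s)
    (t₀ : ℝ) (ht₀ : t₀ ∈ Set.Icc (0:ℝ) T) (hsmall : α * c₀ * H t₀ ^ α * t₀ < 1) :
    ∀ t ∈ Set.Icc (0:ℝ) t₀,
      f t ≤ H t + H t * ((1 - α * c₀ * H t ^ α * t) ^ (-(1/α)) - 1) :=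
  stmt7_general T α c₀ hα hc₀ h f f' hh_int hh_nonneg hf_deriv hf_nonneg hineq H hH t₀ ht₀ hsmall
end
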